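/- Let G be a finite group acting by ring automorphisms on a commutative ring A with unit. Assume that for every subgroup H of G of prime order, every H-fixed element of A is of the form Σ_{σ∈H} σ·a for some a ∈ A (i.e., Ĥ⁰(H,A) = 0). Then for every subgroup H of G, every H-fixed element of A is of the form Σ_{σ∈H} σ·a for some a ∈ A. -/

import Mathlib

/-!
`1 = ∑_{σ ∈ G} σ • y` for some `y` is equivalent to `Ĥ⁰(G, A) = 0`: if `a` is fixed then
`a = ∑_σ σ • (y * a)`. We show `1` is such a norm by induction on `|G|`. Pick `M ≤ G` of prime
order (Cauchy) and `x` with `∑_{m ∈ M} m • x = 1`. The group `G` permutes the left transversals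
`S` of `M`, and `T S = ∏_{t ∈ S} t • x` is equivariant with
`∑_S T S = ∏_{gM} g • ∑_{m ∈ M} m • x = 1`. The stabilizer `K` of a transversal meets `M`
trivially, so it is a proper subgroup and by induction `∑_{k ∈ K} k • z = 1` for some `z`; then
the sum of `T` over the orbit of `S` is the norm of `z * T S`, and summing over orbits exhibits
`1` as a norm.
-/

open MulAction

section Norm

variable (G : Type*) [Group G] (A : Type*) [Semiring A] [MulSemiringAction G A]

def OneIsNorm : Prop :=
  ∃ y : A, ∑ᶠ g : G, g • y = 1

variable {G A}

theorem oneIsNorm_of_subsingleton [Subsingleton G] : OneIsNorm G A := by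
  have : Unique G := uniqueOfSubsingleton 1
  exact ⟨1, by rw [finsum_unique, smul_one]⟩

theorem OneIsNorm.exists_eq_finsum_smul [Finite G] (h : OneIsNorm G A) {a : A}
    (ha : ∀ g : G, g • a = a) : ∃ b : A, a = ∑ᶠ g : G, g • b := by
  obtain ⟨y, hy⟩ := h
  have := Fintype.ofFinite G
  refine ⟨y * a, ?_⟩
  rw [finsum_eq_sum_of_fintype] at hy ⊢
  calc a = (∑ g : G, g • y) * a := by rw [hy, one_mul]
    _ = ∑ g : G, g • (y * a) := by
      simp only [Finset.sum_mul, smul_mul', ha]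

theorem oneIsNorm_map_subtype_iff (H : Subgroup G) (K : Subgroup H) :
    OneIsNorm (K.map H.subtype) A ↔ OneIsNorm K A := by
  refine exists_congr fun y => ?_
  rw [← finsum_comp_equiv (K.equivMapOfInjective H.subtype H.subtype_injective).toEquiv]
  rfl

theorem forall_card_prime_oneIsNorm_subgroup
    (h : ∀ K : Subgroup G, (Nat.card K).Prime → OneIsNorm K A) (H : Subgroup G) :
    ∀ K : Subgroup H, (Nat.card K).Prime → OneIsNorm K A := fun K hK =>
  (oneIsNorm_map_subtype_iff H K).mp <|
    h _ <| by rwa [Subgroup.card_map_of_injective H.subtype_injective]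

end Norm

section Cosets

variable {G : Type*} [Group G] {M : Type*} [AddCommMonoid M]

theorem QuotientGroup.sum_fiber_eq_sum_subgroup (K : Subgroup G) [Fintype K] (q : G ⧸ K)
    [Fintype {g : G // (g : G ⧸ K) = q}] (F : G → M) :
    ∑ g : {g : G // (g : G ⧸ K) = q}, F g = ∑ k : K, F (q.out * k) := by
  let e : K ≃ {g : G // (g : G ⧸ K) = q} :=
    ((QuotientGroup.preimageMkEquivSubgroupProdSet K {q}).trans (Equiv.prodUnique K _)).symm
  exact (Fintype.sum_equiv e _ _ fun k => rfl).symm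

theorem Subgroup.sum_eq_sum_quotient_sum [Fintype G] (K : Subgroup G) [Fintype K]
    [Fintype (G ⧸ K)] (F : G → M) :
    ∑ g, F g = ∑ q : G ⧸ K, ∑ k : K, F (q.out * k) := by
  classical
  rw [← Fintype.sum_fiberwise (QuotientGroup.mk : G → G ⧸ K) F]
  exact Fintype.sum_congr _ _ fun q => QuotientGroup.sum_fiber_eq_sum_subgroup K q F

end Cosets

section Orbits

variable {G : Type*} [Group G] {A : Type*} [Semiring A] [MulSemiringAction G A]
  {X : Type*} [MulAction G X]

theorem sum_smul_mul_eq_sum_orbit [Fintype G] (f : X →[G] A) (s : X) [Fintype (orbit G s)]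
    {z : A} (hz : ∑ᶠ k : stabilizer G s, (k : G) • z = 1) :
    ∑ g : G, g • (z * f s) = ∑ t : orbit G s, f t := by
  classical
  have hfix (k : stabilizer G s) : (k : G) • f s = f s := by
    rw [← map_smul, mem_stabilizer_iff.mp k.2]
  have horbit (q : G ⧸ stabilizer G s) :
      f ((orbitEquivQuotientStabilizer G s).symm q) = q.out • f s := by
    rw [← map_smul, ← orbitEquivQuotientStabilizer_symm_apply, QuotientGroup.out_eq']
  rw [finsum_eq_sum_of_fintype] at hz
  rw [Subgroup.sum_eq_sum_quotient_sum (stabilizer G s),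
    ← Fintype.sum_equiv (orbitEquivQuotientStabilizer G s).symm _ _ fun q => (horbit q).symm]
  refine Fintype.sum_congr _ _ fun q => ?_
  calc ∑ k : stabilizer G s, (q.out * k) • (z * f s)
      = q.out • ((∑ k : stabilizer G s, (k : G) • z) * f s) := by
        simp only [mul_smul, Finset.sum_mul, Finset.smul_sum, smul_mul', hfix]
    _ = q.out • f s := by rw [hz, one_mul]

theorem exists_finsum_smul_eq_finsum [Finite G] [Finite X] (f : X →[G] A)
    (hstab : ∀ s : X, OneIsNorm (stabilizer G s) A) :
    ∃ w : A, ∑ᶠ g : G, g • w = ∑ᶠ s : X, f s := by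
  classical
  have := Fintype.ofFinite G
  have := Fintype.ofFinite X
  choose z hz using hstab
  let out (ω : orbitRel.Quotient G X) : X := ω.out
  refine ⟨∑ ω, z (out ω) * f (out ω), ?_⟩
  rw [finsum_eq_sum_of_fintype, finsum_eq_sum_of_fintype]
  calc ∑ g : G, g • ∑ ω, z (out ω) * f (out ω)
      = ∑ ω, ∑ g : G, g • (z (out ω) * f (out ω)) := by
        simp only [Finset.smul_sum]; exact Finset.sum_comm
    _ = ∑ ω, ∑ t : orbit G (out ω), f t :=
        Fintype.sum_congr _ _ fun ω => sum_smul_mul_eq_sum_orbit f _ (hz _)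
    _ = ∑ p : Σ ω, orbit G (out ω), f p.2 :=
        (Fintype.sum_sigma' fun ω (t : orbit G (out ω)) => f t).symm
    _ = ∑ s, f s := (Fintype.sum_equiv (selfEquivSigmaOrbits G X) _ _ fun s => rfl).symm

end Orbits

section Transversals

variable {G : Type*} [Group G] (M : Subgroup G)

noncomputable def Subgroup.leftTransversalEquivPi :
    M.LeftTransversal ≃ ∀ q : G ⧸ M, {g : G // (g : G ⧸ M) = q} where
  toFun S q := ⟨S.2.leftQuotientEquiv q, S.2.quotientGroupMk_leftQuotientEquiv q⟩
  invFun f := ⟨Set.range fun q => (f q : G), Subgroup.isComplement_range_left fun q => (f q).2⟩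
  left_inv S := Subtype.ext <| by
    show Set.range (Subtype.val ∘ S.2.leftQuotientEquiv) = S
    rw [Set.range_comp, Equiv.range_eq_univ, Set.image_univ, Subtype.range_coe]
  right_inv f := funext fun q =>
    Subtype.ext <| Subgroup.IsComplement.leftQuotientEquiv_apply (fun q => (f q).2) q

variable {A : Type*} [CommSemiring A] [MulSemiringAction G A]

noncomputable def transversalProd [Fintype (G ⧸ M)] (x : A) : M.LeftTransversal →[G] A where
  toFun S := ∏ q : G ⧸ M, (S.2.leftQuotientEquiv q : G) • x
  map_smul' g S := by
    rw [id, Finset.smul_prod']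
    simp only [Subgroup.smul_apply_eq_smul_apply_inv_smul, smul_eq_mul, mul_smul]
    exact Fintype.prod_bijective _ (MulAction.bijective g⁻¹) _ _ fun q => rfl

theorem disjoint_stabilizer_leftTransversal (S : M.LeftTransversal) :
    Disjoint (stabilizer G S) M := by
  refine Subgroup.disjoint_def.mpr fun {k} hkS hkM => ?_
  have hq : k⁻¹ • ((1 : G) : G ⧸ M) = (1 : G) := by
    rw [MulAction.Quotient.smul_coe, smul_eq_mul, QuotientGroup.eq]
    simpa using hkM
  have := congrArg (fun S : M.LeftTransversal => (S.2.leftQuotientEquiv (1 : G) : G))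
    (mem_stabilizer_iff.mp hkS)
  simpa only [Subgroup.smul_apply_eq_smul_apply_inv_smul, hq, smul_eq_mul, mul_eq_right] using this

theorem finsum_transversalProd [Finite G] [Fintype (G ⧸ M)] {x : A}
    (hx : ∑ᶠ m : M, (m : G) • x = 1) : ∑ᶠ S, transversalProd M x S = 1 := by
  classical
  have := Fintype.ofFinite G
  rw [finsum_eq_sum_of_fintype] at hx ⊢
  calc ∑ S, transversalProd M x S
      = ∑ f : ∀ q : G ⧸ M, {g : G // (g : G ⧸ M) = q}, ∏ q, (f q : G) • x :=
        Fintype.sum_equiv M.leftTransversalEquivPi _ _ fun S => by rfl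
    _ = ∏ q : G ⧸ M, ∑ g : {g : G // (g : G ⧸ M) = q}, (g : G) • x :=
        (Fintype.prod_sum fun q (g : {g : G // (g : G ⧸ M) = q}) => (g : G) • x).symm
    _ = ∏ q : G ⧸ M, ∑ m : M, (q.out * m) • x :=
        Fintype.prod_congr _ _ fun q => QuotientGroup.sum_fiber_eq_sum_subgroup M q (· • x)
    _ = 1 := by
        simp only [mul_smul, ← Finset.smul_sum, hx, smul_one, Finset.prod_const_one]

theorem oneIsNorm_of_forall_disjoint [Finite G] (hM : OneIsNorm M A)
    (hK : ∀ K : Subgroup G, Disjoint K M → OneIsNorm K A) : OneIsNorm G A := by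
  have := Fintype.ofFinite (G ⧸ M)
  obtain ⟨x, hx⟩ := hM
  obtain ⟨w, hw⟩ := exists_finsum_smul_eq_finsum (transversalProd M x) fun S =>
    hK _ (disjoint_stabilizer_leftTransversal M S)
  exact ⟨w, hw.trans (finsum_transversalProd M hx)⟩

end Transversals

theorem oneIsNorm_of_forall_card_prime {G : Type*} [Group G] [Finite G] {A : Type*}
    [CommSemiring A] [MulSemiringAction G A]
    (h : ∀ K : Subgroup G, (Nat.card K).Prime → OneIsNorm K A) : OneIsNorm G A := by
  induction hn : Nat.card G using Nat.strong_induction_on generalizing G with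
  | _ n ih =>
    rcases subsingleton_or_nontrivial G with _ | _
    · exact oneIsNorm_of_subsingleton
    obtain ⟨p, hp, hpG⟩ := Nat.exists_prime_and_dvd (Finite.one_lt_card_iff_nontrivial.mpr ‹_›).ne'
    have := Fact.mk hp
    obtain ⟨g, hg⟩ := exists_prime_orderOf_dvd_card' p hpG
    have hcard : Nat.card (Subgroup.zpowers g) = p := by rw [Nat.card_zpowers, hg]
    refine oneIsNorm_of_forall_disjoint _ (h _ (hcard ▸ hp)) fun K hK => ?_
    have hKtop : K ≠ ⊤ := by
      rintro rfl
      rw [top_disjoint] at hK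
      rw [hK, Subgroup.card_bot] at hcard
      exact hp.one_lt.ne hcard
    exact ih _ (hn ▸ K.card_le_card_group.lt_of_ne (hKtop ∘ K.eq_top_of_card_eq))
      (forall_card_prime_oneIsNorm_subgroup h K) rfl

/-- **Aljadeff's theorem (Theorem 4.1).** Let `G` be a finite group acting by ring
automorphisms on a commutative ring `A` with unit.  If for every subgroup `H` of `G` of
prime order every `H`-fixed element of `A` is a norm `∑_{σ ∈ H} σ • a` (i.e.
`Ĥ⁰(H, A) = 0`), then the same holds for every subgroup `H` of `G`. -/
theorem fixed_eq_norm_of_prime_order_fixed_eq_norm_ring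
    (G : Type*) [Group G] [Finite G] (A : Type*) [CommRing A] [MulSemiringAction G A]
    (hprime : ∀ H : Subgroup G, (Nat.card H).Prime →
      ∀ a : A, (∀ σ ∈ H, σ • a = a) → ∃ b : A, a = ∑ᶠ σ : H, (σ : G) • b) :
    ∀ H : Subgroup G, ∀ a : A, (∀ σ ∈ H, σ • a = a) → ∃ b : A, a = ∑ᶠ σ : H, (σ : G) • b := by
  have hone (K : Subgroup G) (hK : (Nat.card K).Prime) : OneIsNorm K A :=
    let ⟨b, hb⟩ := hprime K hK 1 fun σ _ => smul_one σ
    ⟨b, hb.symm⟩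
  intro H a ha
  exact (oneIsNorm_of_forall_card_prime (forall_card_prime_oneIsNorm_subgroup hone H)
    ).exists_eq_finsum_smul fun σ => ha σ σ.2
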